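/- For all integers r ≥ 4 and n ≥ r, the maximum running time of the K_r-bootstrap percolation process satisfies M_r(n) ≥ ⌊(n − 2)/(r − 2)⌋. -/

import Mathlib

/-!
Write `r = d + 2` and cut `ℕ` into blocks `[i d, i d + d + 2)` of `r` vertices, consecutive blocks
sharing the link `e_i = {i d, i d + 1}`. Start from the union of the cliques on the blocks, with the
links `e_i`, `i ≥ 1`, removed. Once `e_j` is present, block `j` is a copy of `K_r` minus `e_{j+1}`,
so `e_j` appears by time `j` whenever block `j - 1` fits into `[n]`, i.e. for `j ≤ ⌊(n - 2)/d⌋`.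

Conversely, both ends of an edge added by a step lie in `(r - 1)`-cliques. Let `F_j` be the starting
graph together with all pairs inside `[0, j d + 2)`. A `(d + 1)`-clique of `F_j` with a vertex
`≥ (j + 1) d + 2` would lie in one block beyond the prefix and contain one of its two disjoint
missing links; so a step maps `F_j` into `F_{j+1}`, and `e_{j+1}` is still missing after `j` steps.
The process on `Fin n` is dominated by the same process on `ℕ`, where this is proved.
-/

/-- One step of the `K_r`-bootstrap percolation process: we add every edge `uv` for which
there is an `r`-element vertex set `S` containing `u` and `v` such that every edge within `S`
other than `uv` is already present. -/
def bootStep {V : Type*} (r : ℕ) (G : SimpleGraph V) : SimpleGraph V where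
  Adj u v := G.Adj u v ∨ (u ≠ v ∧ ∃ S : Finset V, S.card = r ∧ u ∈ S ∧ v ∈ S ∧
    ∀ x ∈ S, ∀ y ∈ S, x ≠ y → ¬((x = u ∧ y = v) ∨ (x = v ∧ y = u)) → G.Adj x y)
  symm := by
    constructor
    intro a b h
    rcases h with h | ⟨hne, S, hS, ha, hb, hall⟩
    · exact Or.inl h.symm
    · refine Or.inr ⟨hne.symm, S, hS, hb, ha, ?_⟩
      intro x hx y hy hxy hno
      exact hall x hx y hy hxy (by tauto)
  loopless := by
    constructor
    intro a h
    rcases h with h | ⟨hne, _⟩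
    · exact G.irrefl h
    · exact hne rfl

/-- The maximum running time `M_r(n)`: the largest `t` such that some initially infected
graph `G` on `n` vertices satisfies `G_t ≠ G_{t-1}` in the `K_r`-bootstrap process. -/
noncomputable def maxRunTime (r n : ℕ) : ℕ :=
  sSup {t | ∃ G : SimpleGraph (Fin n), (bootStep r)^[t] G ≠ (bootStep r)^[t - 1] G}

open SimpleGraph Function

lemma Finset.mem_or_mem_of_subset_of_card_le {α : Type*} {s t : Finset α} (hst : s ⊆ t)
    (hcard : t.card ≤ s.card + 1) {a b : α} (ha : a ∈ t) (hb : b ∈ t) (hab : a ≠ b) :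
    a ∈ s ∨ b ∈ s := by
  classical
  by_contra! h
  have hsub : {a, b} ⊆ t \ s := by
    simp only [Finset.insert_subset_iff, Finset.singleton_subset_iff, Finset.mem_sdiff]
    exact ⟨⟨ha, h.1⟩, hb, h.2⟩
  have := Finset.card_le_card hsub
  rw [Finset.card_pair hab, Finset.card_sdiff_of_subset hst] at this
  omega

-- The orbit of an inflationary map increases strictly until it becomes constant.
lemma lt_card_of_iterate_ne {α : Type*} [PartialOrder α] [Finite α] {f : α → α}
    (hf : ∀ x, x ≤ f x) {x : α} {t : ℕ} (h : f^[t] x ≠ f^[t - 1] x) : t < Nat.card α := by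
  have hmono : StrictMono fun i : Fin (t + 1) => f^[i] x := by
    refine Fin.strictMono_iff_lt_succ.2 fun i => lt_of_le_of_ne ?_ fun heq => h ?_
    · simpa only [Fin.val_succ, Fin.val_castSucc, iterate_succ_apply'] using hf _
    · have hfix : f (f^[i] x) = f^[i] x := by
        simpa only [Fin.val_succ, Fin.val_castSucc, iterate_succ_apply'] using heq.symm
      have key : ∀ m : ℕ, i ≤ m → f^[m] x = f^[i] x := fun m hm => by
        rw [← Nat.sub_add_cancel hm, iterate_add_apply, iterate_fixed hfix]
      rw [key t (by omega), key (t - 1) (by omega)]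
  simpa using Nat.card_le_card_of_injective _ hmono.injective

section BootStep

variable {V W : Type*} (r : ℕ)

lemma le_bootStep (G : SimpleGraph V) : G ≤ bootStep r G := fun _ _ => Or.inl

lemma bootStep_mono : Monotone (bootStep (V := V) r) := by
  intro G H hGH u v huv
  rcases huv with h | ⟨hne, S, hS, hu, hv, hall⟩
  · exact Or.inl (hGH h)
  · exact Or.inr ⟨hne, S, hS, hu, hv, fun x hx y hy hxy h => hGH (hall x hx y hy hxy h)⟩

lemma exists_isNClique_of_bootStep_adj {G : SimpleGraph V} {u v : V}
    (h : (bootStep r G).Adj u v) : G.Adj u v ∨ ∃ s : Finset V, G.IsNClique (r - 1) s ∧ v ∈ s := by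
  classical
  rcases h with h | ⟨hne, S, hS, hu, hv, hall⟩
  · exact Or.inl h
  refine Or.inr ⟨S.erase u, ⟨fun x hx y hy hxy => ?_, by rw [Finset.card_erase_of_mem hu, hS]⟩,
    Finset.mem_erase.2 ⟨hne.symm, hv⟩⟩
  simp only [Finset.coe_erase, Set.mem_sdiff, Finset.mem_coe, Set.mem_singleton_iff] at hx hy
  exact hall x hx.1 y hy.1 hxy (by tauto)

lemma bootStep_comap_le {f : V → W} (hf : Injective f) (G : SimpleGraph W) :
    bootStep r (G.comap f) ≤ (bootStep r G).comap f := by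
  classical
  intro u v huv
  rcases huv with h | ⟨hne, S, hS, hu, hv, hall⟩
  · exact Or.inl h
  refine Or.inr ⟨hf.ne hne, S.image f, by rw [Finset.card_image_of_injective S hf, hS],
    Finset.mem_image_of_mem f hu, Finset.mem_image_of_mem f hv, ?_⟩
  simp only [Finset.mem_image]
  rintro _ ⟨x, hx, rfl⟩ _ ⟨y, hy, rfl⟩ hxy hxy'
  refine hall x hx y hy (ne_of_apply_ne f hxy) fun h => hxy' ?_
  rcases h with ⟨rfl, rfl⟩ | ⟨rfl, rfl⟩ <;> simp

lemma iterate_bootStep_comap_le {f : V → W} (hf : Injective f) (G : SimpleGraph W) (j : ℕ) :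
    (bootStep r)^[j] (G.comap f) ≤ ((bootStep r)^[j] G).comap f := by
  induction j with
  | zero => exact le_rfl
  | succ j ih =>
    rw [iterate_succ_apply', iterate_succ_apply']
    exact (bootStep_mono r ih).trans (bootStep_comap_le r hf _)

end BootStep

lemma bddAbove_runningTimes (r n : ℕ) :
    BddAbove {t | ∃ G : SimpleGraph (Fin n), (bootStep r)^[t] G ≠ (bootStep r)^[t - 1] G} :=
  ⟨Nat.card (SimpleGraph (Fin n)), fun _ ⟨_, h⟩ => (lt_card_of_iterate_ne (le_bootStep r) h).le⟩

/-- The cliques on the blocks `[i * d, i * d + d + 2)`, without the links `{k * d, k * d + 1}` with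
`j < k`. -/
def blockChain (d j : ℕ) : SimpleGraph ℕ := fromRel fun x y =>
  x < y ∧ (∃ i, i * d ≤ x ∧ y < i * d + d + 2) ∧ ∀ k, j < k → ¬(x = k * d ∧ y = k * d + 1)

def blockChainFilled (d j : ℕ) : SimpleGraph ℕ :=
  blockChain d 0 ⊔ fromRel fun x y => x < j * d + 2 ∧ y < j * d + 2

section BlockChain

variable {d : ℕ}

lemma blockChain_adj_link (hd : 1 ≤ d) (k : ℕ) : (blockChain d k).Adj (k * d) (k * d + 1) := by
  refine (fromRel_adj _ _ _).2 ⟨by omega, Or.inl ⟨by omega, ⟨k, by omega, by omega⟩, ?_⟩⟩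
  rintro k' hk' ⟨h, -⟩
  exact hk'.ne (Nat.eq_of_mul_eq_mul_right hd h)

lemma not_blockChainFilled_adj_link (hd : 1 ≤ d) {j k : ℕ} (hjk : j < k) :
    ¬(blockChainFilled d j).Adj (k * d) (k * d + 1) := by
  have hkd : j * d + d ≤ k * d := by nlinarith
  rintro (h | h)
  · rw [blockChain, fromRel_adj] at h
    rcases h.2 with ⟨-, -, hlink⟩ | ⟨h, -⟩
    · exact hlink k (by omega) ⟨rfl, rfl⟩
    · omega
  · rw [fromRel_adj] at h
    omega

lemma blockChainFilled_mono {j j' : ℕ} (h : j ≤ j') :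
    blockChainFilled d j ≤ blockChainFilled d j' := by
  have : j * d ≤ j' * d := Nat.mul_le_mul_right d h
  refine sup_le_sup_left (fun x y hxy => ?_) _
  rw [fromRel_adj] at hxy ⊢
  omega

lemma lt_of_isNClique_blockChainFilled (hd : 2 ≤ d) {j v : ℕ} {s : Finset ℕ}
    (hs : (blockChainFilled d j).IsNClique (d + 1) s) (hv : v ∈ s) : v < (j + 1) * d + 2 := by
  by_contra! hv'
  rw [add_one_mul] at hv'
  have hs₀ : s.Nonempty := ⟨v, hv⟩
  have hab : s.min' hs₀ < s.max' hs₀ := s.min'_lt_max'_of_card (by rw [hs.card_eq]; omega)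
  have hvb : v ≤ s.max' hs₀ := s.le_max' v hv
  obtain ⟨i, hia, hib⟩ : ∃ i, i * d ≤ s.min' hs₀ ∧ s.max' hs₀ < i * d + d + 2 := by
    rcases hs.isClique (s.min'_mem hs₀) (s.max'_mem hs₀) hab.ne with h | h
    · rw [blockChain, fromRel_adj] at h
      rcases h.2 with ⟨-, hblock, -⟩ | ⟨h, -⟩
      · exact hblock
      · omega
    · rw [fromRel_adj] at h
      omega
  have hji : j < i := by nlinarith
  have hsub : s ⊆ Finset.Ico (i * d) (i * d + d + 2) := fun x hx =>
    Finset.mem_Ico.2 ⟨hia.trans (s.min'_le x hx), (s.le_max' x hx).trans_lt hib⟩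
  obtain ⟨k, hjk, hx, hy⟩ : ∃ k, j < k ∧ k * d ∈ s ∧ k * d + 1 ∈ s := by
    by_contra! hlinks
    have hsucc : (i + 1) * d = i * d + d := add_one_mul i d
    obtain ⟨p, hp, hps⟩ : ∃ p, (p = i * d ∨ p = i * d + 1) ∧ p ∉ s := by
      by_cases h : i * d ∈ s
      · exact ⟨_, Or.inr rfl, hlinks i hji h⟩
      · exact ⟨_, Or.inl rfl, h⟩
    obtain ⟨q, hq, hqs⟩ : ∃ q, (q = i * d + d ∨ q = i * d + d + 1) ∧ q ∉ s := by
      by_cases h : i * d + d ∈ s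
      · exact ⟨_, Or.inr rfl, by simpa [hsucc] using hlinks (i + 1) (by omega) (by rwa [hsucc])⟩
      · exact ⟨_, Or.inl rfl, h⟩
    refine (Finset.mem_or_mem_of_subset_of_card_le hsub ?_ (a := p) (b := q) ?_ ?_ ?_).elim hps hqs
    · rw [Nat.card_Ico, hs.card_eq]
      omega
    · rw [Finset.mem_Ico]; omega
    · rw [Finset.mem_Ico]; omega
    · omega
  exact not_blockChainFilled_adj_link (by omega) hjk (hs.isClique hx hy (by omega))

lemma bootStep_blockChainFilled_le (hd : 2 ≤ d) (j : ℕ) :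
    bootStep (d + 2) (blockChainFilled d j) ≤ blockChainFilled d (j + 1) := by
  intro u v huv
  rcases exists_isNClique_of_bootStep_adj _ huv with h | ⟨s, hs, hvs⟩
  · exact blockChainFilled_mono j.le_succ h
  obtain h | ⟨s', hs', hus'⟩ := exists_isNClique_of_bootStep_adj _ huv.symm
  · exact blockChainFilled_mono j.le_succ h.symm
  have hv := lt_of_isNClique_blockChainFilled hd hs hvs
  have hu := lt_of_isNClique_blockChainFilled hd hs' hus'
  exact Or.inr ((fromRel_adj _ _ _).2 ⟨huv.ne, Or.inl ⟨hu, hv⟩⟩)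

lemma iterate_bootStep_le_blockChainFilled (hd : 2 ≤ d) (j : ℕ) :
    (bootStep (d + 2))^[j] (blockChain d 0) ≤ blockChainFilled d j := by
  induction j with
  | zero => exact le_sup_left
  | succ j ih =>
    rw [iterate_succ_apply']
    exact (bootStep_mono _ ih).trans (bootStep_blockChainFilled_le hd j)

lemma blockChain_succ_adj {j x y : ℕ} (h : (blockChain d (j + 1)).Adj x y) :
    (blockChain d j).Adj x y ∨ s(x, y) = s((j + 1) * d, (j + 1) * d + 1) := by
  by_contra! hne
  simp only [blockChain, fromRel_adj, ne_eq, Sym2.eq_iff] at h hne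
  refine hne.1 ⟨h.1, h.2.imp ?_ ?_⟩
  all_goals
    refine fun ⟨hlt, hblock, hlink⟩ => ⟨hlt, hblock, fun k hk hxy => ?_⟩
    rcases Nat.lt_or_ge (j + 1) k with hk' | hk'
    · exact hlink k hk' hxy
    · obtain rfl : k = j + 1 := by omega
      exact hne.2 (by omega)

lemma blockChain_adj_of_mem_block (hd : 1 ≤ d) {j x y : ℕ} (hxy : x ≠ y)
    (hx : x ∈ Finset.Ico (j * d) (j * d + d + 2)) (hy : y ∈ Finset.Ico (j * d) (j * d + d + 2))
    (hlink : s(x, y) ≠ s((j + 1) * d, (j + 1) * d + 1)) : (blockChain d j).Adj x y := by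
  rw [Finset.mem_Ico] at hx hy
  rw [Ne, Sym2.eq_iff, add_one_mul] at hlink
  refine (fromRel_adj _ _ _).2 ⟨hxy, ?_⟩
  rcases lt_or_gt_of_ne hxy with h | h
  all_goals
    first | refine Or.inl ⟨h, ⟨j, by omega, by omega⟩, fun k hk ⟨hx', hy'⟩ => ?_⟩
          | refine Or.inr ⟨h, ⟨j, by omega, by omega⟩, fun k hk ⟨hx', hy'⟩ => ?_⟩
    rcases Nat.lt_or_ge (j + 1) k with hk' | hk'
    · have : (j + 2) * d ≤ k * d := Nat.mul_le_mul_right d hk'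
      rw [add_mul] at this
      omega
    · obtain rfl : k = j + 1 := by omega
      rw [add_one_mul] at hx' hy'
      exact hlink (by omega)

lemma comap_blockChain_succ_le (hd : 1 ≤ d) {n j : ℕ} (hn : (j + 1) * d + 2 ≤ n) :
    (blockChain d (j + 1)).comap (Fin.val : Fin n → ℕ) ≤
      bootStep (d + 2) ((blockChain d j).comap Fin.val) := by
  intro u v huv
  rcases blockChain_succ_adj huv with hold | hlink
  · exact Or.inl hold
  rw [add_one_mul] at hn hlink
  have hblock : ∀ m ∈ Finset.Ico (j * d) (j * d + d + 2), m < n := fun m hm => by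
    rw [Finset.mem_Ico] at hm
    omega
  have hmem : ∀ w : Fin n, (w = u ∨ w = v) →
      w ∈ (Finset.Ico (j * d) (j * d + d + 2)).attachFin hblock := by
    rintro w hw
    rw [Finset.mem_attachFin, Finset.mem_Ico]
    rw [Sym2.eq_iff] at hlink
    rcases hw with rfl | rfl <;> omega
  refine Or.inr ⟨huv.ne, _, by rw [Finset.card_attachFin, Nat.card_Ico]; omega,
    hmem u (Or.inl rfl), hmem v (Or.inr rfl), fun x hx y hy hxy hnot => ?_⟩
  rw [Finset.mem_attachFin] at hx hy
  refine blockChain_adj_of_mem_block hd (Fin.val_injective.ne hxy) hx hy ?_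
  rw [add_one_mul, ← hlink, Ne, Sym2.eq_iff]
  simpa only [Fin.val_inj] using hnot

lemma comap_blockChain_le_iterate (hd : 1 ≤ d) {n : ℕ} (j : ℕ) (hn : j * d + 2 ≤ n) :
    (blockChain d j).comap (Fin.val : Fin n → ℕ) ≤
      (bootStep (d + 2))^[j] ((blockChain d 0).comap Fin.val) := by
  induction j with
  | zero => exact le_rfl
  | succ j ih =>
    rw [iterate_succ_apply']
    have : j * d ≤ (j + 1) * d := Nat.mul_le_mul_right d j.le_succ
    exact (comap_blockChain_succ_le hd hn).trans (bootStep_mono _ (ih (by omega)))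

end BlockChain

/-- For all integers `r ≥ 4` and `n ≥ r`, the maximum running time of the `K_r`-bootstrap
percolation process satisfies `M_r(n) ≥ ⌊(n-2)/(r-2)⌋`. -/
theorem maxRunTime_trivial_lower (r n : ℕ) (hr : 4 ≤ r) (hn : r ≤ n) :
    (n - 2) / (r - 2) ≤ maxRunTime r n := by
  obtain ⟨d, rfl⟩ : ∃ d, r = d + 2 := ⟨r - 2, by omega⟩
  rw [Nat.add_sub_cancel]
  set t := (n - 2) / d
  have ht : 1 ≤ t := (Nat.le_div_iff_mul_le (by omega)).2 (by omega)
  have htn : t * d + 2 ≤ n := by have : t * d ≤ n - 2 := Nat.div_mul_le_self _ _; omega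
  set G := (blockChain d 0).comap (Fin.val : Fin n → ℕ)
  let a : Fin n := ⟨t * d, by omega⟩
  let b : Fin n := ⟨t * d + 1, by omega⟩
  have hnew : ((bootStep (d + 2))^[t] G).Adj a b :=
    comap_blockChain_le_iterate (by omega) t htn (blockChain_adj_link (by omega) t)
  have hold : ¬((bootStep (d + 2))^[t - 1] G).Adj a b := fun h =>
    not_blockChainFilled_adj_link (by omega) (Nat.sub_one_lt_of_lt ht)
      (iterate_bootStep_le_blockChainFilled (by omega) (t - 1)
        (iterate_bootStep_comap_le _ Fin.val_injective _ _ h))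
  exact le_csSup (bddAbove_runningTimes _ n) ⟨G, fun h => hold (h ▸ hnew)⟩
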